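/- For any probability distribution P on a finite set X ⊂ R^N of feature vectors, Σ_{x∈X} P(x) ‖φ(x)‖²_{S(P,λ)^{-1}} ≤ log det S(P,λ) - log det(λ I_N), where S(P,λ) = Σ_x P(x) φ(x)φ(x)ᵀ + λ I_N and λ > 0. -/

import Mathlib

open Matrix

set_option maxHeartbeats 1000000

/-- Regularized design matrix `S(P, λ) = ∑ₓ P(x) φ(x)φ(x)ᵀ + λ I`. -/
noncomputable def designMat {α : Type*} [Fintype α] {N : ℕ} (φ : α → Fin N → ℝ)
    (P : α → ℝ) (lam : ℝ) : Matrix (Fin N) (Fin N) ℝ :=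
  ∑ x, P x • Matrix.vecMulVec (φ x) (φ x) + lam • 1

section aux
variable {N : ℕ}

lemma vecMulVec_posSemidef (v : Fin N → ℝ) : (Matrix.vecMulVec v v).PosSemidef := by
  refine Matrix.PosSemidef.of_dotProduct_mulVec_nonneg ?_ ?_
  · ext i j
    simp [vecMulVec_apply, conjTranspose_apply, mul_comm]
  · intro x
    have h : x ⬝ᵥ (Matrix.vecMulVec v v *ᵥ x) = (v ⬝ᵥ x) ^ 2 := by
      simp [dotProduct, mulVec, vecMulVec_apply, Finset.mul_sum, Finset.sum_mul, pow_two]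
      rw [Finset.sum_comm]
      apply Finset.sum_congr rfl; intros i _
      apply Finset.sum_congr rfl; intros j _
      ring
    simp only [star_trivial, h]
    positivity

lemma psd_smul {A : Matrix (Fin N) (Fin N) ℝ} (hA : A.PosSemidef) {c : ℝ} (hc : 0 ≤ c) :
    (c • A).PosSemidef := by
  refine Matrix.PosSemidef.of_dotProduct_mulVec_nonneg ?_ ?_
  · ext i j
    have := congrFun (congrFun hA.1 i) j
    simp [conjTranspose_apply] at this ⊢
    simp [this]
  · intro x
    have := hA.dotProduct_mulVec_nonneg x
    simp only [smul_mulVec, dotProduct_smul, star_trivial, smul_eq_mul] at this ⊢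
    positivity

lemma quad_eq_trace (M : Matrix (Fin N) (Fin N) ℝ) (v : Fin N → ℝ) :
    v ⬝ᵥ (M *ᵥ v) = (M * Matrix.vecMulVec v v).trace := by
  simp [trace, mul_apply, vecMulVec_apply, dotProduct, mulVec, diag, Finset.mul_sum]
  apply Finset.sum_congr rfl; intros i _
  apply Finset.sum_congr rfl; intros j _
  ring

end aux

theorem stmt3 {α : Type*} [Fintype α] {N : ℕ} (hcard : Fintype.card α = N)
    (φ : α → Fin N → ℝ) (lam : ℝ) (hlam : 0 < lam)
    (P : α → ℝ) (hP : ∀ x, 0 ≤ P x) (hPsum : ∑ x, P x = 1) :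
    ∑ x, P x * (φ x ⬝ᵥ ((designMat φ P lam)⁻¹ *ᵥ φ x))
      ≤ Real.log (designMat φ P lam).det
        - Real.log ((lam • (1 : Matrix (Fin N) (Fin N) ℝ)).det) := by
  set S := designMat φ P lam with hSdef
  have hB : (∑ x, P x • Matrix.vecMulVec (φ x) (φ x)).PosSemidef := by
    refine Finset.sum_induction _ (fun A => Matrix.PosSemidef A)
      (fun a b ha hb => ha.add hb) Matrix.PosSemidef.zero (fun x _ => ?_)
    exact psd_smul (vecMulVec_posSemidef (φ x)) (hP x)
  have hlamI : ((lam • 1 : Matrix (Fin N) (Fin N) ℝ)).PosDef := by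
    refine Matrix.PosDef.of_dotProduct_mulVec_pos ?_ ?_
    · ext i j
      simp [conjTranspose_apply, one_apply, eq_comm]
    · intro x hx
      have hxx : 0 < x ⬝ᵥ x := by
        rw [show (x ⬝ᵥ x) = ∑ i, (x i)^2 by simp [dotProduct, pow_two]]
        rcases Function.ne_iff.mp hx with ⟨i, hi⟩
        apply Finset.sum_pos' (fun j _ => sq_nonneg _) ⟨i, Finset.mem_univ i, by simpa using sq_pos_of_ne_zero hi⟩
      simp only [smul_mulVec, one_mulVec, dotProduct_smul, star_trivial, smul_eq_mul]
      exact mul_pos hlam hxx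
  have hS : S.PosDef := Matrix.PosDef.posSemidef_add hB hlamI
  have hH : S.IsHermitian := hS.1
  set U : Matrix (Fin N) (Fin N) ℝ := (hH.eigenvectorUnitary : Matrix (Fin N) (Fin N) ℝ) with hU
  set μ : Fin N → ℝ := hH.eigenvalues with hμ
  have hμpos : ∀ i, 0 < μ i := hS.eigenvalues_pos
  have hμne : ∀ i, μ i ≠ 0 := fun i => (hμpos i).ne'
  have hUU : star U * U = 1 := (Matrix.mem_unitaryGroup_iff').mp hH.eigenvectorUnitary.2
  have hUU' : U * star U = 1 := (Matrix.mem_unitaryGroup_iff).mp hH.eigenvectorUnitary.2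
  have hspec : S = U * Matrix.diagonal μ * star U := by
    have := hH.spectral_theorem
    simpa using this
  have hinv : S⁻¹ = U * Matrix.diagonal (fun i => (μ i)⁻¹) * star U := by
    apply Matrix.inv_eq_right_inv
    calc S * (U * Matrix.diagonal (fun i => (μ i)⁻¹) * star U)
        = U * (Matrix.diagonal μ * (star U * U) * Matrix.diagonal (fun i => (μ i)⁻¹)) * star U := by
          rw [hspec]; noncomm_ring
      _ = U * (Matrix.diagonal μ * Matrix.diagonal (fun i => (μ i)⁻¹)) * star U := by
          rw [hUU, mul_one]
      _ = U * star U := by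
          rw [Matrix.diagonal_mul_diagonal]
          have : (fun i => μ i * (μ i)⁻¹) = fun _ => (1:ℝ) := by
            funext i; exact mul_inv_cancel₀ (hμne i)
          rw [this, Matrix.diagonal_one, mul_one]
      _ = 1 := hUU'
  have htrinv : S⁻¹.trace = ∑ i, (μ i)⁻¹ := by
    rw [hinv, Matrix.trace_mul_cycle, hUU, one_mul, Matrix.trace_diagonal]
  -- LHS as a trace
  have hLHS : ∑ x, P x * (φ x ⬝ᵥ (S⁻¹ *ᵥ φ x))
      = (S⁻¹ * ∑ x, P x • Matrix.vecMulVec (φ x) (φ x)).trace := by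
    rw [Matrix.mul_sum, Matrix.trace_sum]
    apply Finset.sum_congr rfl
    intro x _
    rw [quad_eq_trace, Matrix.mul_smul, Matrix.trace_smul, smul_eq_mul]
  have hBS : (∑ x, P x • Matrix.vecMulVec (φ x) (φ x)) = S - lam • 1 := by
    rw [hSdef]; unfold designMat; rw [add_sub_cancel_right]
  have hinvS : S⁻¹ * S = 1 := Matrix.nonsing_inv_mul S (isUnit_iff_ne_zero.mpr hS.det_pos.ne')
  have hLHS2 : ∑ x, P x * (φ x ⬝ᵥ (S⁻¹ *ᵥ φ x)) = ∑ i, (1 - lam * (μ i)⁻¹) := by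
    rw [hLHS, hBS, Matrix.mul_sub, Matrix.trace_sub, hinvS, Matrix.mul_smul,
      Matrix.mul_one, Matrix.trace_smul, smul_eq_mul, htrinv, Matrix.trace_one,
      Finset.sum_sub_distrib, Finset.sum_const, Finset.mul_sum]
    simp
  have hdetS : S.det = ∏ i, μ i := by
    have := hH.det_eq_prod_eigenvalues
    simpa using this
  have hdetI : ((lam • (1 : Matrix (Fin N) (Fin N) ℝ)).det) = lam ^ N := by
    simp [Matrix.det_smul]
  rw [hLHS2, hdetS, hdetI, Real.log_prod (fun i _ => hμne i), Real.log_pow]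
  have hstep : ∀ i : Fin N, 1 - lam * (μ i)⁻¹ ≤ Real.log (μ i) - Real.log lam := by
    intro i
    have h1 : Real.log (lam / μ i) ≤ lam / μ i - 1 :=
      Real.log_le_sub_one_of_pos (div_pos hlam (hμpos i))
    rw [Real.log_div hlam.ne' (hμne i)] at h1
    have : lam * (μ i)⁻¹ = lam / μ i := by rw [div_eq_mul_inv]
    linarith
  calc ∑ i, (1 - lam * (μ i)⁻¹) ≤ ∑ i : Fin N, (Real.log (μ i) - Real.log lam) :=
        Finset.sum_le_sum (fun i _ => hstep i)
    _ = (∑ i, Real.log (μ i)) - N * Real.log lam := by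
        rw [Finset.sum_sub_distrib, Finset.sum_const, Finset.card_univ, Fintype.card_fin,
          nsmul_eq_mul]
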